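/- Let f ∈ H₂(Λ₊) with coefficient sequence f̂. Then: (i) Zf ∈ H₂(Λ₊) and its coefficient sequence is the shifted sequence (0, f̂(0), f̂(1), …); (ii) δx f ∈ H₂(Λ₊) and its coefficient sequence is n ↦ f̂(n+1); (iii) for all f, g ∈ H₂(Λ₊), ⟨Zf, g⟩ = ⟨f, δx g⟩, i.e., δx is the adjoint of Z on H₂(Λ₊). -/

import Mathlib

open Complex Finset GaussianInt

noncomputable section

/-- The lattice point `i` in the Gaussian integers. -/
def ii : GaussianInt := ⟨0, 1⟩

/-- `f` is discrete analytic on the whole lattice `Λ = ℤ + iℤ`. -/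
def DAnalytic (f : GaussianInt → ℂ) : Prop :=
  ∀ z : GaussianInt,
    (f (z + 1 + ii) - f z) / (1 + Complex.I) = (f (z + 1) - f (z + ii)) / (1 - Complex.I)

/-- `f` is discrete analytic on the right half lattice `Λ₊ = {z : Re z ≥ 0}`. -/
def DAnalyticOn (f : GaussianInt → ℂ) : Prop :=
  ∀ z : GaussianInt, 0 ≤ z.re →
    (f (z + 1 + ii) - f z) / (1 + Complex.I) = (f (z + 1) - f (z + ii)) / (1 - Complex.I)

/-- `γ 0, γ 1, …, γ n` is a path in the lattice from `a` to `b`: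
consecutive points are at distance `1`. -/
def IsPath (γ : ℕ → GaussianInt) (n : ℕ) (a b : GaussianInt) : Prop :=
  γ 0 = a ∧ γ n = b ∧ ∀ k < n, ‖(γ (k + 1) : ℂ) - (γ k : ℂ)‖ = 1

/-- The discrete integral `∫_γ f δz` along the path `γ 0, …, γ n`. -/
def discInt (f : GaussianInt → ℂ) (γ : ℕ → GaussianInt) (n : ℕ) : ℂ :=
  ∑ k ∈ Finset.range n, ((f (γ k) + f (γ (k + 1))) / 2) * ((γ (k + 1) : ℂ) - (γ k : ℂ))

/-- The canonical lattice path from `0` to `z`: first along the real axis, then vertically. -/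
def cpath (z : GaussianInt) (k : ℕ) : GaussianInt :=
  ⟨z.re.sign * ((min k z.re.natAbs : ℕ) : ℤ),
   z.im.sign * ((min k (z.re.natAbs + z.im.natAbs) - z.re.natAbs : ℕ) : ℤ)⟩

/-- The length of the canonical path from `0` to `z`. -/
def cpathLen (z : GaussianInt) : ℕ := z.re.natAbs + z.im.natAbs

/-- The operator `Z`: `Zf(z) = (f(0) - f(z))/2 + ∫_0^z f δz`, the integral being taken
along the canonical path (for discrete analytic `f` the integral is path-independent). -/
def Zop (f : GaussianInt → ℂ) : GaussianInt → ℂ := fun z =>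
  (f 0 - f z) / 2 + discInt f (cpath z) (cpathLen z)

/-- The basic discrete analytic polynomials `z⁽ⁿ⁾ = Zⁿ1`. -/
def zpoly (n : ℕ) : GaussianInt → ℂ := Zop^[n] (fun _ => 1)

/-- `α₊ = (1+i)/2`. -/
def aPlus : ℂ := (1 + Complex.I) / 2
/-- `α₋ = (1-i)/2`. -/
def aMinus : ℂ := (1 - Complex.I) / 2

/-- The difference operator `δx`. -/
def dxOp (f : GaussianInt → ℂ) : GaussianInt → ℂ := fun z => f (z + 1) - f z
/-- The difference operator `δy`. -/
def dyOp (f : GaussianInt → ℂ) : GaussianInt → ℂ := fun z => f (z + ii) - f z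

/-- `f` belongs to the Hardy space `H₂(Λ₊)` with coefficient sequence `c`:
`f(z) = Σ c(n) z⁽ⁿ⁾(z)` on `Λ₊` and `Σ |c(n)|² < ∞`. -/
def MemH2 (f : GaussianInt → ℂ) (c : ℕ → ℂ) : Prop :=
  Summable (fun n => ‖c n‖ ^ 2) ∧
  ∀ z : GaussianInt, 0 ≤ z.re → HasSum (fun n => c n * zpoly n z) (f z)

/-!
The key identity is `δx (Z g) = g` on `Λ₊` for discrete analytic `g`. On the real axis it is
immediate from the canonical path. The vertical difference `δy (Z g)` is a local expression in `g`
for every `g`, so the discrete analyticity of each unit square carries the identity from one row to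
the next. Hence `δx z⁽ⁿ⁺¹⁾ = z⁽ⁿ⁾`, and since `Z` and `δx` are finite linear
combinations of point evaluations, they act termwise on the expansion `f = Σ f̂(n) z⁽ⁿ⁾`, shifting
the coefficients. The adjoint identity is then a reindexing of `Σ f̂(n) conj ĝ(n + 1)`.
-/

@[simp] lemma ii_re : ii.re = 0 := rfl
@[simp] lemma ii_im : ii.im = 1 := rfl
@[simp] lemma toComplex_ii : ((ii : GaussianInt) : ℂ) = Complex.I := by simp [ii, toComplex_def]

lemma mk_add_ii (r m : ℤ) : (⟨r, m⟩ : GaussianInt) + ii = ⟨r, m + 1⟩ := by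
  ext <;> simp

def signedMin (x : ℤ) (k : ℕ) : ℤ := x.sign * (min k x.natAbs : ℕ)

lemma cpath_eq_signedMin (z : GaussianInt) (k : ℕ) :
    cpath z k = ⟨signedMin z.re k, signedMin z.im (k - z.re.natAbs)⟩ := by
  simp only [cpath, signedMin, Zsqrtd.mk.injEq, true_and]
  congr 2
  omega

lemma signedMin_add_one {x : ℤ} {k : ℕ} (hk : k ≤ x.natAbs) (hk' : k ≤ (x + 1).natAbs) :
    signedMin (x + 1) k = signedMin x k := by
  rcases Nat.eq_zero_or_pos k with rfl | hk0
  · simp [signedMin]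
  unfold signedMin
  rcases lt_or_ge x 0 with hx | hx
  · rw [Int.sign_eq_neg_one_of_neg hx, Int.sign_eq_neg_one_of_neg (by omega)]
    congr 2; omega
  · rw [Int.sign_eq_one_of_pos (by omega), Int.sign_eq_one_of_pos (by omega)]
    congr 2; omega

lemma cpath_last (z : GaussianInt) : cpath z (cpathLen z) = z := by
  rw [cpath_eq_signedMin]
  ext <;> simp [signedMin, cpathLen, Int.sign_mul_abs]

lemma cpath_re_nonneg {z : GaussianInt} (hz : 0 ≤ z.re) (k : ℕ) : 0 ≤ (cpath z k).re :=
  mul_nonneg (Int.sign_nonneg_iff.mpr hz) (Int.natCast_nonneg _)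

lemma cpath_add_ii {z : GaussianInt} {k : ℕ} (hk : k ≤ cpathLen z) (hk' : k ≤ cpathLen (z + ii)) :
    cpath (z + ii) k = cpath z k := by
  simp only [cpath_eq_signedMin, cpathLen, Zsqrtd.re_add, Zsqrtd.im_add, ii_re, ii_im,
    add_zero] at *
  rw [signedMin_add_one (by omega) (by omega)]

lemma cpath_add_one {z : GaussianInt} {k : ℕ} (hk : k ≤ z.re.natAbs)
    (hk' : k ≤ (z + 1).re.natAbs) : cpath (z + 1) k = cpath z k := by
  simp only [cpath_eq_signedMin, Zsqrtd.re_add, Zsqrtd.im_add, Zsqrtd.re_one, Zsqrtd.im_one,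
    add_zero] at *
  rw [signedMin_add_one hk hk', Nat.sub_eq_zero_of_le hk, Nat.sub_eq_zero_of_le hk']

lemma discInt_cpath_of_cpathLen_eq_succ (g : GaussianInt → ℂ) {a b : GaussianInt}
    (hlen : cpathLen b = cpathLen a + 1) (hpath : ∀ k ≤ cpathLen a, cpath b k = cpath a k) :
    discInt g (cpath b) (cpathLen b)
      = discInt g (cpath a) (cpathLen a) + (g a + g b) / 2 * ((b : ℂ) - (a : ℂ)) := by
  have hb : cpath b (cpathLen a + 1) = b := hlen ▸ cpath_last b
  unfold discInt
  rw [hlen, Finset.sum_range_succ, hpath _ le_rfl, cpath_last, hb]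
  congr 1
  refine Finset.sum_congr rfl fun k hk => ?_
  rw [Finset.mem_range] at hk
  rw [hpath k hk.le, hpath (k + 1) hk]

lemma discInt_cpath_add_ii (g : GaussianInt → ℂ) (z : GaussianInt) :
    discInt g (cpath (z + ii)) (cpathLen (z + ii))
      = discInt g (cpath z) (cpathLen z) + (g z + g (z + ii)) / 2 * Complex.I := by
  have hlen : cpathLen (z + ii) = cpathLen z + 1 ∨ cpathLen z = cpathLen (z + ii) + 1 := by
    simp only [cpathLen, Zsqrtd.re_add, Zsqrtd.im_add, ii_re, ii_im, add_zero]
    omega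
  rcases hlen with hlen | hlen
  · rw [discInt_cpath_of_cpathLen_eq_succ g hlen fun k hk => cpath_add_ii hk (by omega)]
    simp
  · rw [discInt_cpath_of_cpathLen_eq_succ g hlen fun k hk => (cpath_add_ii (by omega) hk).symm]
    simp only [toComplex_add, toComplex_ii, sub_add_cancel_left]
    ring

lemma discInt_cpath_add_one_of_im_eq_zero (g : GaussianInt → ℂ) {z : GaussianInt}
    (hz : 0 ≤ z.re) (him : z.im = 0) :
    discInt g (cpath (z + 1)) (cpathLen (z + 1))
      = discInt g (cpath z) (cpathLen z) + (g z + g (z + 1)) / 2 := by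
  have hlen : cpathLen (z + 1) = cpathLen z + 1 := by
    simp only [cpathLen, Zsqrtd.re_add, Zsqrtd.im_add, Zsqrtd.re_one, Zsqrtd.im_one, him]
    omega
  rw [discInt_cpath_of_cpathLen_eq_succ g hlen fun k hk => cpath_add_one ?_ ?_]
  · simp
  all_goals simp only [cpathLen, Zsqrtd.re_add, Zsqrtd.re_one, him] at hk ⊢; omega

lemma dyOp_Zop (g : GaussianInt → ℂ) (z : GaussianInt) :
    dyOp (Zop g) z = (g z - g (z + ii)) / 2 + (g z + g (z + ii)) / 2 * Complex.I := by
  simp only [dyOp, Zop, discInt_cpath_add_ii]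
  ring

lemma dxOp_Zop_of_im_eq_zero (g : GaussianInt → ℂ) {z : GaussianInt} (hz : 0 ≤ z.re)
    (him : z.im = 0) : dxOp (Zop g) z = g z := by
  simp only [dxOp, Zop, discInt_cpath_add_one_of_im_eq_zero g hz him]
  ring

lemma one_add_I_ne_zero : 1 + Complex.I ≠ 0 := by
  intro h; simpa using congrArg Complex.im h

lemma one_sub_I_ne_zero : 1 - Complex.I ≠ 0 := by
  intro h; simpa using congrArg Complex.im h

lemma dxOp_Zop_add_ii_iff {g : GaussianInt → ℂ} (hg : DAnalyticOn g) {w : GaussianInt}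
    (hw : 0 ≤ w.re) : dxOp (Zop g) (w + ii) = g (w + ii) ↔ dxOp (Zop g) w = g w := by
  have hsq := (div_eq_div_iff one_add_I_ne_zero one_sub_I_ne_zero).1 (hg w hw)
  have hleft := dyOp_Zop g w
  have hright := dyOp_Zop g (w + 1)
  simp only [dxOp, dyOp, add_right_comm w ii 1] at *
  constructor <;> intro h
  · linear_combination h - hright + hleft + hsq / 2
  · linear_combination h + hright - hleft - hsq / 2

lemma dxOp_Zop {g : GaussianInt → ℂ} (hg : DAnalyticOn g) {z : GaussianInt} (hz : 0 ≤ z.re) :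
    dxOp (Zop g) z = g z := by
  have step (m : ℤ) :
      dxOp (Zop g) ⟨z.re, m + 1⟩ = g ⟨z.re, m + 1⟩ ↔ dxOp (Zop g) ⟨z.re, m⟩ = g ⟨z.re, m⟩ := by
    rw [← mk_add_ii]
    exact dxOp_Zop_add_ii_iff hg hz
  have column (m : ℤ) : dxOp (Zop g) ⟨z.re, m⟩ = g ⟨z.re, m⟩ := by
    induction m using Int.induction_on with
    | zero => exact dxOp_Zop_of_im_eq_zero g hz rfl
    | succ m ih => exact (step m).2 ih
    | pred m ih => exact (step (-m - 1)).1 (by rwa [sub_add_cancel])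
  exact column z.im

theorem DAnalyticOn.Zop {g : GaussianInt → ℂ} (hg : DAnalyticOn g) : DAnalyticOn (Zop g) := by
  intro z hz
  have h1 := dxOp_Zop hg hz
  have h2 := dxOp_Zop hg (z := z + ii) (by simpa using hz)
  have h3 := dyOp_Zop g z
  simp only [dxOp, dyOp] at h1 h2 h3
  rw [div_eq_div_iff one_add_I_ne_zero one_sub_I_ne_zero, add_right_comm]
  linear_combination (1 - Complex.I) * h2 + 2 * h3 - (1 + Complex.I) * h1

lemma zpoly_zero : zpoly 0 = fun _ => 1 := rfl

lemma zpoly_succ (n : ℕ) : zpoly (n + 1) = Zop (zpoly n) :=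
  Function.iterate_succ_apply' _ _ _

lemma dAnalyticOn_zpoly (n : ℕ) : DAnalyticOn (zpoly n) := by
  induction n with
  | zero => intro z _; simp [zpoly_zero]
  | succ n ih => rw [zpoly_succ]; exact ih.Zop

lemma dxOp_zpoly_succ (n : ℕ) {z : GaussianInt} (hz : 0 ≤ z.re) :
    dxOp (zpoly (n + 1)) z = zpoly n z := by
  rw [zpoly_succ]
  exact dxOp_Zop (dAnalyticOn_zpoly n) hz

lemma Zop_const_mul (a : ℂ) (g : GaussianInt → ℂ) :
    Zop (fun w => a * g w) = fun w => a * Zop g w := by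
  funext z
  simp only [Zop, discInt, mul_add, Finset.mul_sum]
  congr 1
  · ring
  · exact Finset.sum_congr rfl fun k _ => by ring

lemma hasSum_Zop {F : ℕ → GaussianInt → ℂ} {f : GaussianInt → ℂ}
    (hF : ∀ w : GaussianInt, 0 ≤ w.re → HasSum (fun n => F n w) (f w))
    {z : GaussianInt} (hz : 0 ≤ z.re) : HasSum (fun n => Zop (F n) z) (Zop f z) := by
  have hpath (k : ℕ) := hF _ (cpath_re_nonneg hz k)
  unfold Zop discInt
  exact (((hF 0 le_rfl).sub (hF z hz)).div_const 2).add
    (hasSum_sum fun k _ => (((hpath k).add (hpath (k + 1))).div_const 2).mul_right _)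

lemma hasSum_nat_succ_iff_of_eq_zero {α : Type*} [AddCommGroup α] [TopologicalSpace α]
    [IsTopologicalAddGroup α] {F : ℕ → α} (hF : F 0 = 0) {a : α} :
    HasSum (fun n => F (n + 1)) a ↔ HasSum F a := by
  simpa [hF] using hasSum_nat_add_iff (f := F) 1

lemma tsum_eq_tsum_succ_of_eq_zero {α : Type*} [AddCommMonoid α] [TopologicalSpace α]
    {F : ℕ → α} (hF : F 0 = 0) : ∑' n, F n = ∑' n, F (n + 1) :=
  (tsum_pnat_eq_tsum_of_eq_zero hF).symm.trans tsum_pnat_eq_tsum_succ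

theorem MemH2.Zop {f : GaussianInt → ℂ} {c : ℕ → ℂ} (hf : MemH2 f c) :
    MemH2 (Zop f) (fun n => if n = 0 then 0 else c (n - 1)) := by
  refine ⟨(summable_nat_add_iff 1).1 (by simpa using hf.1), fun z hz => ?_⟩
  refine (hasSum_nat_succ_iff_of_eq_zero (by simp)).1 ?_
  simpa [zpoly_succ, Zop_const_mul] using hasSum_Zop (F := fun n w => c n * zpoly n w) hf.2 hz

theorem MemH2.dxOp {f : GaussianInt → ℂ} {c : ℕ → ℂ} (hf : MemH2 f c) :
    MemH2 (dxOp f) (fun n => c (n + 1)) := by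
  refine ⟨(summable_nat_add_iff 1).2 hf.1, fun z hz => ?_⟩
  have hdiff := (hf.2 (z + 1) (by rw [Zsqrtd.re_add, Zsqrtd.re_one]; omega)).sub (hf.2 z hz)
  rw [← hasSum_nat_succ_iff_of_eq_zero (by simp [zpoly_zero])] at hdiff
  have hterm (n : ℕ) : c (n + 1) * zpoly (n + 1) (z + 1) - c (n + 1) * zpoly (n + 1) z
      = c (n + 1) * zpoly n z := by
    rw [← mul_sub, ← dxOp_zpoly_succ n hz, _root_.dxOp]
  simp only [hterm] at hdiff
  exact hdiff

/-- For `f ∈ H₂(Λ₊)` with coefficients `f̂`: (i) `Zf ∈ H₂(Λ₊)` with the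
shifted coefficient sequence `(0, f̂(0), f̂(1), …)`; (ii) `δx f ∈ H₂(Λ₊)` with coefficients
`n ↦ f̂(n+1)`; (iii) `⟨Zf, g⟩ = ⟨f, δx g⟩` for all `g ∈ H₂(Λ₊)` (inner products being computed
from the coefficient sequences), i.e. `δx` is the adjoint of `Z` on `H₂(Λ₊)`. -/
theorem stmt13 (f : GaussianInt → ℂ) (c : ℕ → ℂ) (hf : MemH2 f c) :
    MemH2 (Zop f) (fun n => if n = 0 then 0 else c (n - 1)) ∧
    MemH2 (dxOp f) (fun n => c (n + 1)) ∧
    ∀ (g : GaussianInt → ℂ) (d : ℕ → ℂ), MemH2 g d →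
      ∑' n : ℕ, (if n = 0 then 0 else c (n - 1)) * (starRingEnd ℂ) (d n)
        = ∑' n : ℕ, c n * (starRingEnd ℂ) (d (n + 1)) := by
  exact ⟨hf.Zop, hf.dxOp, fun g d _ => (tsum_eq_tsum_succ_of_eq_zero (by simp)).trans (by simp)⟩
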